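/- Let (Ω₁ × Ω₂, μ) be a finite correlated probability space such that every atom has μ(ω₁,ω₂) ≥ α or μ(ω₁,ω₂) = 0. Define the bipartite graph G on Ω₁ ∪ Ω₂ with an edge (a,b) whenever μ(a,b) > 0. If G is connected, then the maximal correlation satisfies ρ(Ω₁,Ω₂;μ) ≤ 1 − α²/2. -/

import Mathlib

/-- The bipartite graph on `Ω₁ ⊕ Ω₂` with an edge `(a,b)` whenever
`μ a b > 0`. -/
def bipartiteSupportGraph {Ω₁ Ω₂ : Type*} (μ : Ω₁ → Ω₂ → ℝ) :
    SimpleGraph (Ω₁ ⊕ Ω₂) where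
  Adj x y :=
    (∃ a b, x = Sum.inl a ∧ y = Sum.inr b ∧ 0 < μ a b) ∨
    (∃ a b, x = Sum.inr b ∧ y = Sum.inl a ∧ 0 < μ a b)
  symm := by
    constructor
    rintro x y (⟨a, b, rfl, rfl, h⟩ | ⟨a, b, rfl, rfl, h⟩)
    · exact Or.inr ⟨a, b, rfl, rfl, h⟩
    · exact Or.inl ⟨a, b, rfl, rfl, h⟩
  loopless := by
    constructor
    rintro x (⟨a, b, rfl, h, _⟩ | ⟨a, b, rfl, h, _⟩) <;> simp at h

/-!
Let `W` be the symmetric weight on `Ω₁ ⊕ Ω₂` giving both orientations of the edge `(a, b)` the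
mass `μ a b`, and let `g = Sum.elim f₁ f₂`. The degree measure `ν x = ∑ y, W x y` has total mass
`2`, `g` has `ν`-mean `0` and `ν`-second moment `2`, and the Dirichlet energy
`∑ W x y (g x - g y)²` equals `4 - 4 Cov(f₁, f₂)`. By Popoviciu's inequality `g` takes two values
`g x, g y` at distance at least `2`. Along a path from `x` to `y` (shorter than `|Ω₁ ⊕ Ω₂|`) every
edge has weight at least `α`, so Cauchy–Schwarz gives `4α ≤ α (g x - g y)² ≤ |Ω₁ ⊕ Ω₂| · energy`;
and every vertex has degree at least `α`, so `α |Ω₁ ⊕ Ω₂| ≤ 2`. Hence `2α² ≤ energy`.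
-/

open Finset

namespace SimpleGraph

variable {V : Type*} {G : SimpleGraph V}

theorem Walk.sq_sub_le_length_mul_sum_darts (g : V → ℝ) {x y : V} (w : G.Walk x y) :
    (g x - g y) ^ 2 ≤ w.length * (w.darts.map fun d => (g d.fst - g d.snd) ^ 2).sum := by
  induction w with
  | nil => simp
  | @cons u v z _ w ih =>
    simp only [Walk.length_cons, Walk.darts_cons, List.map_cons, List.sum_cons]
    push_cast
    have hS : 0 ≤ (w.darts.map fun d => (g d.fst - g d.snd) ^ 2).sum :=
      List.sum_nonneg (by simp [sq_nonneg])
    rw [show g u - g z = (g u - g v) + (g v - g z) by ring]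
    -- With `a = g u - g v`, `r = g v - g z`, `S` the sum over `w` and `n = w.length`:
    -- `n ((n + 1)(a² + S) - (a + r)²) = (n a - r)² + (n + 1)(n S - r²)`.
    rcases (Nat.cast_nonneg (α := ℝ) w.length).eq_or_lt with hn | hn
    · rw [← hn] at ih ⊢
      nlinarith
    · nlinarith [sq_nonneg (w.length * (g u - g v) - (g v - g z))]

theorem Walk.IsTrail.sum_darts_le_sum_sum [Fintype V] {x y : V} {w : G.Walk x y}
    (hw : w.IsTrail) (h : V → V → ℝ) (hh : ∀ x y, 0 ≤ h x y) :
    (w.darts.map fun d => h d.fst d.snd).sum ≤ ∑ x, ∑ y, h x y := by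
  classical
  have hnodup : (w.darts.map Dart.toProd).Nodup :=
    (hw.edges_nodup.of_map _).map Dart.toProd_injective
  rw [← Fintype.sum_prod_type', show (w.darts.map fun d => h d.fst d.snd)
    = (w.darts.map Dart.toProd).map (fun p => h p.1 p.2) by simp, ← List.sum_toFinset _ hnodup]
  exact sum_le_univ_sum_of_nonneg fun p => hh p.1 p.2

theorem Connected.mul_sq_sub_le_card_mul_sum [Fintype V] (hG : G.Connected)
    {W : V → V → ℝ} (hW : ∀ x y, 0 ≤ W x y) {α : ℝ} (hα : 0 ≤ α)
    (hαW : ∀ x y, G.Adj x y → α ≤ W x y) (g : V → ℝ) (x y : V) :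
    α * (g x - g y) ^ 2 ≤ Fintype.card V * ∑ x, ∑ y, W x y * (g x - g y) ^ 2 := by
  obtain ⟨p, hp⟩ := (hG x y).exists_isPath
  have hdarts : α * (p.darts.map fun d => (g d.fst - g d.snd) ^ 2).sum
      ≤ (p.darts.map fun d => W d.fst d.snd * (g d.fst - g d.snd) ^ 2).sum := by
    rw [← List.sum_map_mul_left]
    exact List.sum_le_sum fun d _ => by gcongr; exact hαW _ _ d.adj
  have hsum := hp.isTrail.sum_darts_le_sum_sum (fun x y => W x y * (g x - g y) ^ 2)
    fun x y => mul_nonneg (hW x y) (sq_nonneg _)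
  have hlen : (p.length : ℝ) ≤ Fintype.card V := by exact_mod_cast hp.length_lt.le
  calc α * (g x - g y) ^ 2
      ≤ α * (p.length * (p.darts.map fun d => (g d.fst - g d.snd) ^ 2).sum) := by
        gcongr; exact p.sq_sub_le_length_mul_sum_darts g
    _ = p.length * (α * (p.darts.map fun d => (g d.fst - g d.snd) ^ 2).sum) := by ring
    _ ≤ p.length * ∑ x, ∑ y, W x y * (g x - g y) ^ 2 := by gcongr; exact hdarts.trans hsum
    _ ≤ Fintype.card V * ∑ x, ∑ y, W x y * (g x - g y) ^ 2 := by
        gcongr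
        exact sum_nonneg fun x _ => sum_nonneg fun y _ => mul_nonneg (hW x y) (sq_nonneg _)

theorem Connected.mul_card_le_sum_sum [Fintype V] [Nontrivial V] (hG : G.Connected)
    {W : V → V → ℝ} (hW : ∀ x y, 0 ≤ W x y) {α : ℝ} (hαW : ∀ x y, G.Adj x y → α ≤ W x y) :
    α * Fintype.card V ≤ ∑ x, ∑ y, W x y := by
  rw [mul_comm, ← nsmul_eq_mul, ← card_univ]
  refine card_nsmul_le_sum _ _ _ fun x _ => ?_
  obtain ⟨y, hxy⟩ := hG.preconnected.exists_adj_of_nontrivial x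
  exact (hαW x y hxy).trans (single_le_sum (fun y _ => hW x y) (mem_univ y))

end SimpleGraph

/-- Popoviciu's inequality: for the extreme values `M = g i` and `m = g j`,
`0 ≤ ∑ ν (M - g)(g - m) = -M m ∑ ν - ∑ ν g²`, and `-4 M m ≤ (M - m)²`. -/
theorem exists_four_mul_sum_mul_sq_le {ι : Type*} [Fintype ι] [Nonempty ι] {ν : ι → ℝ}
    (hν : ∀ i, 0 ≤ ν i) (g : ι → ℝ) (hmean : ∑ i, ν i * g i = 0) :
    ∃ i j, 4 * ∑ k, ν k * g k ^ 2 ≤ (g i - g j) ^ 2 * ∑ k, ν k := by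
  obtain ⟨i, hi⟩ := Finite.exists_max g
  obtain ⟨j, hj⟩ := Finite.exists_min g
  refine ⟨i, j, ?_⟩
  have hexpand : ∑ k, ν k * ((g i - g k) * (g k - g j))
      = (g i + g j) * ∑ k, ν k * g k - g i * g j * ∑ k, ν k - ∑ k, ν k * g k ^ 2 := by
    simp only [mul_sum, ← sum_sub_distrib]
    exact sum_congr rfl fun k _ => by ring
  have hprod : 0 ≤ ∑ k, ν k * ((g i - g k) * (g k - g j)) :=
    sum_nonneg fun k _ => mul_nonneg (hν k) (mul_nonneg (sub_nonneg.2 (hi k)) (sub_nonneg.2 (hj k)))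
  have hmass : 0 ≤ ∑ k, ν k := sum_nonneg fun k _ => hν k
  rw [hexpand, hmean] at hprod
  nlinarith [mul_nonneg (sq_nonneg (g i + g j)) hmass]

section Bipartite

variable {Ω₁ Ω₂ : Type*}

/-- The degrees `∑ y, bipartiteWeight μ x y` are the two marginals of `μ`. -/
def bipartiteWeight (μ : Ω₁ → Ω₂ → ℝ) : Ω₁ ⊕ Ω₂ → Ω₁ ⊕ Ω₂ → ℝ
  | .inl a, .inr b => μ a b
  | .inr b, .inl a => μ a b
  | _, _ => 0

theorem bipartiteWeight_nonneg {μ : Ω₁ → Ω₂ → ℝ} (hμ : ∀ a b, 0 ≤ μ a b) :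
    ∀ x y, 0 ≤ bipartiteWeight μ x y := by
  rintro (a | b) (a' | b') <;> simp [bipartiteWeight, hμ]

theorem le_bipartiteWeight_of_adj {μ : Ω₁ → Ω₂ → ℝ} {α : ℝ} (hμ : ∀ a b, μ a b = 0 ∨ α ≤ μ a b)
    {x y : Ω₁ ⊕ Ω₂} (hxy : (bipartiteSupportGraph μ).Adj x y) : α ≤ bipartiteWeight μ x y := by
  rcases hxy with ⟨a, b, rfl, rfl, h⟩ | ⟨a, b, rfl, rfl, h⟩ <;>
    exact (hμ a b).resolve_left h.ne'

theorem sum_sum_bipartiteWeight_mul [Fintype Ω₁] [Fintype Ω₂] (μ : Ω₁ → Ω₂ → ℝ)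
    (F : Ω₁ ⊕ Ω₂ → Ω₁ ⊕ Ω₂ → ℝ) :
    ∑ x, ∑ y, bipartiteWeight μ x y * F x y
      = ∑ a, ∑ b, μ a b * (F (.inl a) (.inr b) + F (.inr b) (.inl a)) := by
  simp only [Fintype.sum_sum_type, bipartiteWeight, zero_mul, sum_const_zero, zero_add, add_zero,
    mul_add, sum_add_distrib]
  rw [add_comm, sum_comm (s := (univ : Finset Ω₂))]

theorem sum_sum_bipartiteWeight_mul_sq_sub [Fintype Ω₁] [Fintype Ω₂] (μ : Ω₁ → Ω₂ → ℝ)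
    (f₁ : Ω₁ → ℝ) (f₂ : Ω₂ → ℝ) :
    ∑ x, ∑ y, bipartiteWeight μ x y * (Sum.elim f₁ f₂ x - Sum.elim f₁ f₂ y) ^ 2
      = 2 * ∑ a, ∑ b, μ a b * f₁ a ^ 2 + 2 * ∑ a, ∑ b, μ a b * f₂ b ^ 2
        - 4 * ∑ a, ∑ b, μ a b * (f₁ a * f₂ b) := by
  rw [sum_sum_bipartiteWeight_mul]
  simp only [Sum.elim_inl, Sum.elim_inr, mul_sum, ← sum_add_distrib, ← sum_sub_distrib]
  exact sum_congr rfl fun a _ => sum_congr rfl fun b _ => by ring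

theorem sum_degree_bipartiteWeight_mul [Fintype Ω₁] [Fintype Ω₂] (μ : Ω₁ → Ω₂ → ℝ)
    (h : Ω₁ ⊕ Ω₂ → ℝ) :
    ∑ x, (∑ y, bipartiteWeight μ x y) * h x
      = ∑ a, ∑ b, μ a b * h (.inl a) + ∑ a, ∑ b, μ a b * h (.inr b) := by
  simp only [sum_mul]
  rw [sum_sum_bipartiteWeight_mul]
  simp only [mul_add, sum_add_distrib]

end Bipartite

/-- **Connected support implies bounded maximal correlation.**
Let `(Ω₁ × Ω₂, μ)` be a finite correlated probability space whose atoms all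
satisfy `μ(ω₁,ω₂) ≥ α` or `μ(ω₁,ω₂) = 0`. If the bipartite support graph is
connected, then for all `f₁, f₂` of mean `0` and variance `1`,
`Cov(f₁(ω₁), f₂(ω₂)) ≤ 1 − α²/2`; i.e. `ρ(Ω₁,Ω₂;μ) ≤ 1 − α²/2`. -/
theorem correlation_le_of_connected
    {Ω₁ Ω₂ : Type*} [Fintype Ω₁] [Fintype Ω₂]
    (μ : Ω₁ → Ω₂ → ℝ) (hnn : ∀ a b, 0 ≤ μ a b)
    (htot : ∑ a, ∑ b, μ a b = 1)
    (α : ℝ) (hα : 0 < α)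
    (hatom : ∀ a b, μ a b = 0 ∨ α ≤ μ a b)
    (hconn : (bipartiteSupportGraph μ).Connected)
    (f₁ : Ω₁ → ℝ) (f₂ : Ω₂ → ℝ)
    (hm₁ : ∑ a, ∑ b, μ a b * f₁ a = 0)
    (hm₂ : ∑ a, ∑ b, μ a b * f₂ b = 0)
    (hv₁ : ∑ a, ∑ b, μ a b * (f₁ a) ^ 2 = 1)
    (hv₂ : ∑ a, ∑ b, μ a b * (f₂ b) ^ 2 = 1) :
    ∑ a, ∑ b, μ a b * (f₁ a * f₂ b) ≤ 1 - α ^ 2 / 2 := by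
  set g : Ω₁ ⊕ Ω₂ → ℝ := Sum.elim f₁ f₂
  have hW := bipartiteWeight_nonneg hnn
  have hαW : ∀ x y, (bipartiteSupportGraph μ).Adj x y → α ≤ bipartiteWeight μ x y :=
    fun _ _ => le_bipartiteWeight_of_adj hatom
  have hmass : ∑ x, ∑ y, bipartiteWeight μ x y = 2 := by
    simpa [htot, one_add_one_eq_two] using sum_degree_bipartiteWeight_mul μ 1
  have hmean : ∑ x, (∑ y, bipartiteWeight μ x y) * g x = 0 := by
    rw [sum_degree_bipartiteWeight_mul]; simp [g, hm₁, hm₂]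
  have hsecond : ∑ x, (∑ y, bipartiteWeight μ x y) * g x ^ 2 = 2 := by
    rw [sum_degree_bipartiteWeight_mul]; simp [g, hv₁, hv₂, one_add_one_eq_two]
  obtain ⟨a, -, ha⟩ := exists_ne_zero_of_sum_ne_zero (htot.trans_ne one_ne_zero)
  obtain ⟨b, -, -⟩ := exists_ne_zero_of_sum_ne_zero ha
  have : Nontrivial (Ω₁ ⊕ Ω₂) := ⟨.inl a, .inr b, Sum.inl_ne_inr⟩
  obtain ⟨x, y, hgap⟩ := exists_four_mul_sum_mul_sq_le (fun x => sum_nonneg fun y _ => hW x y) g hmean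
  have hpath := hconn.mul_sq_sub_le_card_mul_sum hW hα.le hαW g x y
  have hcard := hconn.mul_card_le_sum_sum hW hαW
  have henergy : 0 ≤ ∑ x, ∑ y, bipartiteWeight μ x y * (g x - g y) ^ 2 :=
    sum_nonneg fun x _ => sum_nonneg fun y _ => mul_nonneg (hW x y) (sq_nonneg _)
  rw [hsecond, hmass] at hgap
  rw [hmass] at hcard
  rw [sum_sum_bipartiteWeight_mul_sq_sub, hv₁, hv₂] at hpath henergy
  nlinarith [mul_le_mul_of_nonneg_right hcard henergy]
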